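/- Suppose ∫₀¹∫₀¹ Q(τ,σ) dτ dσ < ∞, where Q(τ,σ) := ∑_{t₁,t₂,t₃∈ℤ} |E[X_{t₁}(τ) X_{t₂}(σ) X_{t₃}(τ) X_0(σ)]|. Then there exists an integrable function f : [0,1]² → [0,∞) (one may take f = (7/π)·Q) such that for every T ≥ 1 and every (τ,σ) ∈ [0,1]², 2π √T · E| S_{T,2}(τ,σ) − S_{T,1}(τ,σ)·conj(S_{T,1}(τ,σ)) | ≤ f(τ,σ). -/

import Mathlib

/-!
Write `p_ω(τ,σ) = X̃_ω(τ) X̃_{-ω}(σ)`. Expanding `|p_ω|²` as a fourfold sum over times in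
`[0,T)` and taking expectations, stationarity turns every fourth moment into one with last
index `0`; for a fixed last index the remaining three indices range injectively over `ℤ³`,
so `E|p_ω(τ,σ)|² ≤ T·Q(τ,σ)/(2πT)² = Q(τ,σ)/(4π²T)` uniformly in `ω`.
Both `S_{T,2}` and `S_{T,1}` average at most `T/2` periodogram ordinates with weight `2/T`,
so `|ab| ≤ (|a|² + |b|²)/2` and Cauchy–Schwarz bound `E|S_{T,2}|` and `E|S_{T,1}|²` by the
same quantity. Hence `2π√T·E|S_{T,2} − |S_{T,1}|²| ≤ Q/(π√T) ≤ Q`, and `f = Q` works.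
-/

open MeasureTheory Real Finset
open scoped ComplexConjugate ENNReal

instance : ENNReal.HolderTriple 4 4 2 where
  inv_add_inv_eq_inv := by
    rw [← ENNReal.toReal_eq_toReal_iff' (by simp) (by simp)]
    norm_num [ENNReal.toReal_add]

section Moments

variable {Ω : Type*} [MeasurableSpace Ω] {μ : Measure Ω}

lemma integrable_mul_mul_mul_of_memLp_four {f g h k : Ω → ℝ} (hf : MemLp f 4 μ)
    (hg : MemLp g 4 μ) (hh : MemLp h 4 μ) (hk : MemLp k 4 μ) :
    Integrable (fun x => f x * g x * h x * k x) μ := by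
  have := (hg.mul' (r := 2) hf).integrable_mul (hk.mul' (r := 2) hh)
  simpa only [Pi.mul_def, ← mul_assoc] using this

lemma ofReal_norm_sum_mul_sq {ι : Type*} (s : Finset ι) (c : ι → ℂ) (w : ι → ℝ) :
    ((‖∑ i ∈ s, c i * w i‖ ^ 2 : ℝ) : ℂ) =
      ∑ i ∈ s, ∑ j ∈ s, c i * conj (c j) * ((w i * w j : ℝ) : ℂ) := by
  rw [Complex.ofReal_pow, ← Complex.mul_conj', map_sum, sum_mul_sum]
  refine sum_congr rfl fun i _ => sum_congr rfl fun j _ => ?_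
  simp only [map_mul, Complex.conj_ofReal, Complex.ofReal_mul]
  ring

lemma integral_norm_sum_mul_sq_le {ι : Type*} (s : Finset ι) {c : ι → ℂ} (hc : ∀ i, ‖c i‖ ≤ 1)
    {w : ι → Ω → ℝ} (hw : ∀ i j, Integrable (fun x => w i x * w j x) μ) :
    ∫ x, ‖∑ i ∈ s, c i * w i x‖ ^ 2 ∂μ ≤ ∑ i ∈ s, ∑ j ∈ s, |∫ x, w i x * w j x ∂μ| := by
  have hint : ∀ i j, Integrable (fun x => c i * conj (c j) * ((w i x * w j x : ℝ) : ℂ)) μ :=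
    fun i j => (hw i j).ofReal.const_mul _
  calc ∫ x, ‖∑ i ∈ s, c i * w i x‖ ^ 2 ∂μ
      = ‖∫ x, ((‖∑ i ∈ s, c i * w i x‖ ^ 2 : ℝ) : ℂ) ∂μ‖ := by
        rw [integral_complex_ofReal, Complex.norm_real,
          norm_of_nonneg (integral_nonneg fun _ => by positivity)]
    _ = ‖∑ i ∈ s, ∑ j ∈ s, c i * conj (c j) * ((∫ x, w i x * w j x ∂μ : ℝ) : ℂ)‖ := by
        simp_rw [ofReal_norm_sum_mul_sq]
        rw [integral_finsetSum _ fun i _ => integrable_finsetSum _ fun j _ => hint i j]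
        refine congrArg norm (sum_congr rfl fun i _ => ?_)
        rw [integral_finsetSum _ fun j _ => hint i j]
        simp_rw [integral_const_mul, integral_complex_ofReal]
    _ ≤ ∑ i ∈ s, ∑ j ∈ s, ‖c i * conj (c j) * ((∫ x, w i x * w j x ∂μ : ℝ) : ℂ)‖ :=
        (norm_sum_le _ _).trans (sum_le_sum fun i _ => norm_sum_le _ _)
    _ ≤ ∑ i ∈ s, ∑ j ∈ s, |∫ x, w i x * w j x ∂μ| := by
        gcongr with i _ j _
        rw [norm_mul, norm_mul, Complex.norm_conj, Complex.norm_real, Real.norm_eq_abs]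
        exact mul_le_of_le_one_left (abs_nonneg _)
          (mul_le_one₀ (hc i) (norm_nonneg _) (hc j))

end Moments

/-- For each value `u` of the last index, shifting the other three by `-u` embeds them
injectively into `ℤ³`. -/
lemma sum_abs_le_card_mul_tsum_of_shift_invariant {m : ℤ → ℤ → ℤ → ℤ → ℝ}
    (hm : ∀ u₁ u₂ u₃ u₄, m u₁ u₂ u₃ u₄ = m (u₁ - u₄) (u₂ - u₄) (u₃ - u₄) 0)
    (hsum : Summable fun t : ℤ × ℤ × ℤ => |m t.1 t.2.1 t.2.2 0|) (s : Finset ℕ) :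
    ∑ i ∈ s ×ˢ s, ∑ j ∈ s ×ˢ s, |m i.1 i.2 j.1 j.2| ≤
      #s * ∑' t : ℤ × ℤ × ℤ, |m t.1 t.2.1 t.2.2 0| := by
  set g : ℤ × ℤ × ℤ → ℝ := fun t => |m t.1 t.2.1 t.2.2 0|
  have hshift : ∀ u : ℕ, ∑ k ∈ (s ×ˢ s) ×ˢ s, |m k.1.1 k.1.2 k.2 u| ≤ ∑' t, g t := by
    intro u
    set e : (ℕ × ℕ) × ℕ → ℤ × ℤ × ℤ := fun k => (k.1.1 - u, k.1.2 - u, k.2 - u)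
    have he : Function.Injective e := by
      intro a b h
      simp only [e, Prod.ext_iff] at h ⊢
      omega
    calc ∑ k ∈ (s ×ˢ s) ×ˢ s, |m k.1.1 k.1.2 k.2 u| = ∑ k ∈ (s ×ˢ s) ×ˢ s, g (e k) := by
          simp only [g, e, hm _ _ _ (u : ℤ)]
      _ ≤ ∑' k, g (e k) :=
          (hsum.comp_injective he).sum_le_tsum _ fun _ _ => abs_nonneg _
      _ ≤ ∑' t, g t :=
          (hsum.comp_injective he).tsum_le_tsum_of_inj e he (fun _ _ => abs_nonneg _)
            (fun _ => le_rfl) hsum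
  calc ∑ i ∈ s ×ˢ s, ∑ j ∈ s ×ˢ s, |m i.1 i.2 j.1 j.2|
      = ∑ u ∈ s, ∑ k ∈ (s ×ˢ s) ×ˢ s, |m k.1.1 k.1.2 k.2 u| := by
        rw [sum_comm (s := s)]
        simp only [sum_product]
    _ ≤ ∑ _u ∈ s, ∑' t, g t := sum_le_sum fun u _ => hshift u
    _ = #s * ∑' t, g t := by rw [sum_const, nsmul_eq_mul]

section Averages

variable {Ω : Type*} [MeasurableSpace Ω] {μ : Measure Ω} {ι : Type*}

lemma integral_norm_sum_mul_conj_le (s : Finset ι) {u v : ι → Ω → ℂ} {B : ℝ}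
    (hu : ∀ k, MemLp (u k) 2 μ) (hv : ∀ k, MemLp (v k) 2 μ)
    (huB : ∀ k, ∫ x, ‖u k x‖ ^ 2 ∂μ ≤ B) (hvB : ∀ k, ∫ x, ‖v k x‖ ^ 2 ∂μ ≤ B) :
    ∫ x, ‖∑ k ∈ s, u k x * conj (v k x)‖ ∂μ ≤ #s * B := by
  have hu2 : ∀ k, Integrable (fun x => ‖u k x‖ ^ 2) μ := fun k => (hu k).norm.integrable_sq
  have hv2 : ∀ k, Integrable (fun x => ‖v k x‖ ^ 2) μ := fun k => (hv k).norm.integrable_sq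
  have hmean : ∀ k, Integrable (fun x => (‖u k x‖ ^ 2 + ‖v k x‖ ^ 2) / 2) μ :=
    fun k => ((hu2 k).add (hv2 k)).div_const 2
  calc ∫ x, ‖∑ k ∈ s, u k x * conj (v k x)‖ ∂μ
      ≤ ∫ x, ∑ k ∈ s, (‖u k x‖ ^ 2 + ‖v k x‖ ^ 2) / 2 ∂μ := by
        refine integral_mono_of_nonneg (ae_of_all _ fun _ => norm_nonneg _)
          (integrable_finsetSum _ fun k _ => hmean k)
          (ae_of_all _ fun x => (norm_sum_le _ _).trans (sum_le_sum fun k _ => ?_))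
        rw [norm_mul, Complex.norm_conj]
        nlinarith [sq_nonneg (‖u k x‖ - ‖v k x‖)]
    _ = ∑ k ∈ s, ((∫ x, ‖u k x‖ ^ 2 ∂μ) + ∫ x, ‖v k x‖ ^ 2 ∂μ) / 2 := by
        rw [integral_finsetSum _ fun k _ => hmean k]
        simp_rw [integral_div, integral_add (hu2 _) (hv2 _)]
    _ ≤ ∑ _k ∈ s, B := by
        gcongr with k
        linarith [huB k, hvB k]
    _ = #s * B := by rw [sum_const, nsmul_eq_mul]

lemma integral_norm_sum_add_conj_sq_le (s : Finset ι) {u : ι → Ω → ℂ} {B : ℝ}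
    (hu : ∀ k, MemLp (u k) 2 μ) (huB : ∀ k, ∫ x, ‖u k x‖ ^ 2 ∂μ ≤ B) :
    ∫ x, ‖∑ k ∈ s, (u k x + conj (u k x))‖ ^ 2 ∂μ ≤ 4 * #s ^ 2 * B := by
  have hu2 : ∀ k, Integrable (fun x => ‖u k x‖ ^ 2) μ := fun k => (hu k).norm.integrable_sq
  have hpointwise : ∀ x, ‖∑ k ∈ s, (u k x + conj (u k x))‖ ^ 2 ≤
      (#s : ℝ) * ∑ k ∈ s, 4 * ‖u k x‖ ^ 2 := fun x =>
    calc ‖∑ k ∈ s, (u k x + conj (u k x))‖ ^ 2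
        ≤ (∑ k ∈ s, 2 * ‖u k x‖) ^ 2 := by
          gcongr
          refine (norm_sum_le _ _).trans (sum_le_sum fun k _ => ?_)
          exact (norm_add_le _ _).trans_eq (by rw [Complex.norm_conj]; ring)
      _ ≤ (#s : ℝ) * ∑ k ∈ s, (2 * ‖u k x‖) ^ 2 := sq_sum_le_card_mul_sum_sq
      _ = (#s : ℝ) * ∑ k ∈ s, 4 * ‖u k x‖ ^ 2 := by simp only [mul_pow]; norm_num
  calc ∫ x, ‖∑ k ∈ s, (u k x + conj (u k x))‖ ^ 2 ∂μ
      ≤ ∫ x, (#s : ℝ) * ∑ k ∈ s, 4 * ‖u k x‖ ^ 2 ∂μ :=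
        integral_mono_of_nonneg (ae_of_all _ fun _ => by positivity)
          ((integrable_finsetSum _ fun k _ => (hu2 k).const_mul 4).const_mul _)
          (ae_of_all _ hpointwise)
    _ = (#s : ℝ) * ∑ k ∈ s, 4 * ∫ x, ‖u k x‖ ^ 2 ∂μ := by
        rw [integral_const_mul, integral_finsetSum _ fun k _ => (hu2 k).const_mul 4]
        simp_rw [integral_const_mul]
    _ ≤ (#s : ℝ) * ∑ _k ∈ s, 4 * B := by gcongr with k; exact huB k
    _ = 4 * #s ^ 2 * B := by rw [sum_const, nsmul_eq_mul]; ring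

lemma memLp_conj {p : ℝ≥0∞} {f : Ω → ℂ} (hf : MemLp f p μ) : MemLp (fun x => conj (f x)) p μ :=
  hf.star

lemma integral_norm_sub_mul_conj_le {W Z : Ω → ℂ} (hW : Integrable W μ) (hZ : MemLp Z 2 μ) :
    ∫ x, ‖W x - Z x * conj (Z x)‖ ∂μ ≤ (∫ x, ‖W x‖ ∂μ) + ∫ x, ‖Z x‖ ^ 2 ∂μ := by
  have hZ2 : Integrable (fun x => ‖Z x‖ ^ 2) μ := hZ.norm.integrable_sq
  rw [← integral_add hW.norm hZ2]
  refine integral_mono_of_nonneg (ae_of_all _ fun _ => norm_nonneg _) (hW.norm.add hZ2)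
    (ae_of_all _ fun x => (norm_sub_le _ _).trans_eq ?_)
  simp only [norm_mul, Complex.norm_conj, sq]

end Averages

section Periodogram

variable {Ω : Type*}

/-- With `Y t = X_t(τ)` this is `X̃_ω(τ)`; `P ω = p_ω(τ,σ)` turns `periodogramSum` and
`lagProductSum` into `S_{T,1}(τ,σ)` and `S_{T,2}(τ,σ)`. -/
noncomputable def functionalDFT (Y : ℤ → Ω → ℝ) (T : ℕ) (ω : ℝ) (x : Ω) : ℂ :=
  (1 / Real.sqrt (2 * π * T) : ℝ) *
    ∑ t ∈ range T, ((Y t x : ℂ) * Complex.exp (-(Complex.I * ω * t)))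

noncomputable def periodogramSum (P : ℝ → Ω → ℂ) (T : ℕ) (x : Ω) : ℂ :=
  (1 / (T : ℂ)) * ∑ k ∈ Icc 1 (T / 2), (P (2 * π * k / T) x + conj (P (2 * π * k / T) x))

noncomputable def lagProductSum (P : ℝ → Ω → ℂ) (T : ℕ) (x : Ω) : ℂ :=
  (2 / (T : ℂ)) * ∑ k ∈ Icc 2 (T / 2),
    P (2 * π * k / T) x * conj (P (2 * π * ((k : ℝ) - 1) / T) x)

lemma norm_exp_neg_I_mul_mul (ω : ℝ) (t : ℕ) : ‖Complex.exp (-(Complex.I * ω * t))‖ = 1 := by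
  simp [Complex.norm_exp]

lemma functionalDFT_mul_functionalDFT (Y Y' : ℤ → Ω → ℝ) (T : ℕ) (ω ω' : ℝ) (x : Ω) :
    functionalDFT Y T ω x * functionalDFT Y' T ω' x =
      ((2 * π * T)⁻¹ : ℝ) * ∑ i ∈ range T ×ˢ range T,
        Complex.exp (-(Complex.I * ω * i.1)) * Complex.exp (-(Complex.I * ω' * i.2)) *
          ((Y i.1 x * Y' i.2 x : ℝ) : ℂ) := by
  have hsqrt : (1 / Real.sqrt (2 * π * T)) * (1 / Real.sqrt (2 * π * T)) = (2 * π * T)⁻¹ := by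
    rw [div_mul_div_comm, one_mul, Real.mul_self_sqrt (by positivity), one_div]
  rw [functionalDFT, functionalDFT, mul_mul_mul_comm, ← Complex.ofReal_mul, hsqrt, sum_mul_sum,
    sum_product]
  simp only [mul_sum]
  refine sum_congr rfl fun i _ => sum_congr rfl fun j _ => ?_
  push_cast
  ring

variable [MeasurableSpace Ω] {μ : Measure Ω}

lemma memLp_functionalDFT {q : ℝ≥0∞} {Y : ℤ → Ω → ℝ} (hY : ∀ t, MemLp (Y t) q μ) (T : ℕ)
    (ω : ℝ) : MemLp (functionalDFT Y T ω) q μ := by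
  have := fun t => ((hY t).ofReal (K := ℂ)).mul_const (Complex.exp (-(Complex.I * ω * t)))
  exact (memLp_finsetSum (range T) fun t _ => this t).const_mul _

lemma integral_norm_sq_functionalDFT_mul_le {Y Y' : ℤ → Ω → ℝ} (hY : ∀ t, MemLp (Y t) 4 μ)
    (hY' : ∀ t, MemLp (Y' t) 4 μ) (T : ℕ) (ω ω' : ℝ) :
    ∫ x, ‖functionalDFT Y T ω x * functionalDFT Y' T ω' x‖ ^ 2 ∂μ ≤
      (2 * π * T)⁻¹ ^ 2 * ∑ i ∈ range T ×ˢ range T, ∑ j ∈ range T ×ˢ range T,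
        |∫ x, Y i.1 x * Y' i.2 x * Y j.1 x * Y' j.2 x ∂μ| := by
  simp_rw [functionalDFT_mul_functionalDFT, norm_mul, mul_pow, Complex.norm_real,
    integral_const_mul, Real.norm_eq_abs, sq_abs]
  gcongr
  refine (integral_norm_sum_mul_sq_le _ (fun i => ?_) fun i j => ?_).trans_eq ?_
  · rw [norm_mul, norm_exp_neg_I_mul_mul, norm_exp_neg_I_mul_mul, one_mul]
  · simpa only [← mul_assoc] using
      integrable_mul_mul_mul_of_memLp_four (hY i.1) (hY' i.2) (hY j.1) (hY' j.2)
  · simp only [← mul_assoc]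

lemma integral_norm_sq_functionalDFT_mul_le_tsum {X : ℤ → ℝ → Ω → ℝ}
    (hX4 : ∀ t τ, MemLp (X t τ) 4 μ)
    (hstat : ∀ (u₁ u₂ u₃ u₄ : ℤ) (τ σ : ℝ),
      (∫ x, X u₁ τ x * X u₂ σ x * X u₃ τ x * X u₄ σ x ∂μ)
        = ∫ x, X (u₁ - u₄) τ x * X (u₂ - u₄) σ x * X (u₃ - u₄) τ x * X 0 σ x ∂μ)
    {τ σ : ℝ} (hsum : Summable fun t : ℤ × ℤ × ℤ =>
        |∫ x, X t.1 τ x * X t.2.1 σ x * X t.2.2 τ x * X 0 σ x ∂μ|) (T : ℕ) (ω ω' : ℝ) :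
    ∫ x, ‖functionalDFT (X · τ) T ω x * functionalDFT (X · σ) T ω' x‖ ^ 2 ∂μ ≤
      (∑' t : ℤ × ℤ × ℤ, |∫ x, X t.1 τ x * X t.2.1 σ x * X t.2.2 τ x * X 0 σ x ∂μ|) /
        (4 * π ^ 2 * T) := by
  calc _ ≤ (2 * π * T)⁻¹ ^ 2 * ∑ i ∈ range T ×ˢ range T, ∑ j ∈ range T ×ˢ range T,
        |∫ x, X i.1 τ x * X i.2 σ x * X j.1 τ x * X j.2 σ x ∂μ| :=
        integral_norm_sq_functionalDFT_mul_le (hX4 · τ) (hX4 · σ) T ω ω'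
    _ ≤ (2 * π * T)⁻¹ ^ 2 * (#(range T) * ∑' t : ℤ × ℤ × ℤ,
        |∫ x, X t.1 τ x * X t.2.1 σ x * X t.2.2 τ x * X 0 σ x ∂μ|) := by
        gcongr
        exact sum_abs_le_card_mul_tsum_of_shift_invariant (hstat · · · · τ σ) hsum _
    _ = _ := by
        rw [card_range]
        rcases Nat.eq_zero_or_pos T with rfl | hT
        · simp
        · field_simp
          ring

section Sums

variable {P : ℝ → Ω → ℂ} {B : ℝ}

lemma cast_card_Icc_half_le {a : ℕ} (ha : 1 ≤ a) (T : ℕ) : (#(Icc a (T / 2)) : ℝ) ≤ T / 2 := by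
  refine le_trans ?_ Nat.cast_div_le
  rw [Nat.card_Icc]
  exact_mod_cast (by omega : T / 2 + 1 - a ≤ T / 2)

lemma memLp_periodogramSum (hP : ∀ ω, MemLp (P ω) 2 μ) (T : ℕ) :
    MemLp (periodogramSum P T) 2 μ :=
  (memLp_finsetSum (Icc 1 (T / 2)) fun k _ =>
    (hP (2 * π * k / T)).add (memLp_conj (hP _))).const_mul _

lemma integrable_lagProductSum (hP : ∀ ω, MemLp (P ω) 2 μ) (T : ℕ) :
    Integrable (lagProductSum P T) μ := by
  have hterm : ∀ k : ℕ, Integrable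
      (fun x => P (2 * π * k / T) x * conj (P (2 * π * ((k : ℝ) - 1) / T) x)) μ :=
    fun k => (hP _).integrable_mul (memLp_conj (hP _))
  exact (integrable_finsetSum _ fun k _ => hterm k).const_mul _

lemma integral_norm_periodogramSum_sq_le (hP : ∀ ω, MemLp (P ω) 2 μ)
    (hPB : ∀ ω, ∫ x, ‖P ω x‖ ^ 2 ∂μ ≤ B) (T : ℕ) :
    ∫ x, ‖periodogramSum P T x‖ ^ 2 ∂μ ≤ B := by
  have hB : 0 ≤ B := (integral_nonneg fun _ => by positivity).trans (hPB 0)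
  have hcard := cast_card_Icc_half_le le_rfl T
  simp only [periodogramSum, norm_mul, mul_pow, integral_const_mul]
  calc _ ≤ ‖1 / (T : ℂ)‖ ^ 2 * (4 * #(Icc 1 (T / 2)) ^ 2 * B) := by
        gcongr
        exact integral_norm_sum_add_conj_sq_le _ (fun _ => hP _) fun _ => hPB _
    _ ≤ B := by
        rw [norm_div, norm_one, Complex.norm_natCast, div_pow, one_pow, ← mul_assoc,
          one_div_mul_eq_div]
        refine mul_le_of_le_one_left hB (div_le_one_of_le₀ ?_ (by positivity))
        nlinarith [(#(Icc 1 (T / 2))).cast_nonneg (α := ℝ)]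

lemma integral_norm_lagProductSum_le (hP : ∀ ω, MemLp (P ω) 2 μ)
    (hPB : ∀ ω, ∫ x, ‖P ω x‖ ^ 2 ∂μ ≤ B) (T : ℕ) :
    ∫ x, ‖lagProductSum P T x‖ ∂μ ≤ B := by
  have hB : 0 ≤ B := (integral_nonneg fun _ => by positivity).trans (hPB 0)
  have hcard := cast_card_Icc_half_le (by norm_num : 1 ≤ 2) T
  simp only [lagProductSum, norm_mul, integral_const_mul]
  calc _ ≤ ‖2 / (T : ℂ)‖ * (#(Icc 2 (T / 2)) * B) := by
        gcongr
        exact integral_norm_sum_mul_conj_le _ (fun _ => hP _) (fun _ => hP _) (fun _ => hPB _)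
          fun _ => hPB _
    _ ≤ B := by
        rw [norm_div, Complex.norm_natCast, Complex.norm_two, ← mul_assoc, div_mul_eq_mul_div]
        exact mul_le_of_le_one_left hB (div_le_one_of_le₀ (by linarith) (Nat.cast_nonneg _))

end Sums

end Periodogram

lemma two_pi_sqrt_mul_add_le {T : ℕ} (hT : 1 ≤ T) {q : ℝ} (hq : 0 ≤ q) :
    2 * π * √T * (q / (4 * π ^ 2 * T) + q / (4 * π ^ 2 * T)) ≤ q := by
  have hsqrt : 1 ≤ √(T : ℝ) := Real.one_le_sqrt.mpr (by exact_mod_cast hT)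
  calc _ = q / (π * √T) := by
        field_simp
        rw [Real.sq_sqrt (Nat.cast_nonneg _)]
        ring
    _ ≤ q := div_le_self hq (one_le_mul_of_one_le_of_one_le (by linarith [pi_gt_three]) hsqrt)

theorem dominating_function_exists_general
    {Ω : Type*} [MeasureSpace Ω]
    (X : ℤ → ℝ → Ω → ℝ)
    (hX4 : ∀ (t : ℤ) (τ : ℝ), MemLp (fun x : Ω => X t τ x) 4)
    (hstat : ∀ (u₁ u₂ u₃ u₄ : ℤ) (τ σ : ℝ),
      (∫ x, X u₁ τ x * X u₂ σ x * X u₃ τ x * X u₄ σ x)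
        = ∫ x, X (u₁ - u₄) τ x * X (u₂ - u₄) σ x * X (u₃ - u₄) τ x * X 0 σ x)
    (Xt : ℕ → ℝ → ℝ → Ω → ℂ)
    (hXt : ∀ (T : ℕ) (ω τ : ℝ) (x : Ω), Xt T ω τ x = (1 / Real.sqrt (2 * π * T) : ℝ) *
      ∑ t ∈ Finset.range T, ((X t τ x : ℂ) * Complex.exp (-(Complex.I * ω * t))))
    (p : ℕ → ℝ → ℝ → ℝ → Ω → ℂ)
    (hp : ∀ (T : ℕ) (ω τ σ : ℝ) (x : Ω), p T ω τ σ x = Xt T ω τ x * Xt T (-ω) σ x)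
    (S1 S2 : ℕ → ℝ → ℝ → Ω → ℂ)
    (hS1 : ∀ (T : ℕ) (τ σ : ℝ) (x : Ω), S1 T τ σ x = (1 / (T : ℂ)) *
      ∑ k ∈ Finset.Icc 1 (T / 2),
        (p T (2 * π * k / T) τ σ x + conj (p T (2 * π * k / T) τ σ x)))
    (hS2 : ∀ (T : ℕ) (τ σ : ℝ) (x : Ω), S2 T τ σ x = (2 / (T : ℂ)) *
      ∑ k ∈ Finset.Icc 2 (T / 2),
        p T (2 * π * k / T) τ σ x * conj (p T (2 * π * ((k : ℝ) - 1) / T) τ σ x))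
    (Q : ℝ → ℝ → ℝ)
    (hQ : ∀ τ σ : ℝ, Q τ σ = ∑' t : ℤ × ℤ × ℤ,
      |∫ x, X t.1 τ x * X t.2.1 σ x * X t.2.2 τ x * X 0 σ x|)
    (hQsum : ∀ τ ∈ Set.Icc (0 : ℝ) 1, ∀ σ ∈ Set.Icc (0 : ℝ) 1,
      Summable fun t : ℤ × ℤ × ℤ =>
        |∫ x, X t.1 τ x * X t.2.1 σ x * X t.2.2 τ x * X 0 σ x|)
    (hQint : IntegrableOn (fun q : ℝ × ℝ => Q q.1 q.2)
      (Set.Icc 0 1 ×ˢ Set.Icc 0 1)) :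
    ∃ f : ℝ × ℝ → ℝ,
      IntegrableOn f (Set.Icc 0 1 ×ˢ Set.Icc 0 1)
      ∧ (∀ q : ℝ × ℝ, 0 ≤ f q)
      ∧ ∀ (T : ℕ), 1 ≤ T → ∀ τ ∈ Set.Icc (0 : ℝ) 1, ∀ σ ∈ Set.Icc (0 : ℝ) 1,
          2 * π * Real.sqrt T *
              ∫ x, ‖S2 T τ σ x - S1 T τ σ x * conj (S1 T τ σ x)‖
            ≤ f (τ, σ) := by
  have hQ_nonneg : ∀ τ σ, 0 ≤ Q τ σ := fun τ σ => hQ τ σ ▸ tsum_nonneg fun _ => abs_nonneg _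
  refine ⟨fun q => Q q.1 q.2, hQint, fun q => hQ_nonneg q.1 q.2, fun T hT τ hτ σ hσ => ?_⟩
  set P : ℝ → Ω → ℂ := fun ω => p T ω τ σ
  have hP_dft : ∀ ω, P ω = fun x =>
      functionalDFT (X · τ) T ω x * functionalDFT (X · σ) T (-ω) x :=
    fun ω => funext fun x => by rw [show P ω x = p T ω τ σ x from rfl, hp, hXt, hXt]; rfl
  have hP : ∀ ω, MemLp (P ω) 2 := fun ω => hP_dft ω ▸
    (memLp_functionalDFT (hX4 · σ) T (-ω)).mul' (memLp_functionalDFT (hX4 · τ) T ω)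
  have hPB : ∀ ω, ∫ x, ‖P ω x‖ ^ 2 ≤ Q τ σ / (4 * π ^ 2 * T) := fun ω => by
    rw [hP_dft, hQ]
    exact integral_norm_sq_functionalDFT_mul_le_tsum hX4 hstat (hQsum τ hτ σ hσ) T ω (-ω)
  have hS1P : S1 T τ σ = periodogramSum P T := funext (hS1 T τ σ)
  have hS2P : S2 T τ σ = lagProductSum P T := funext (hS2 T τ σ)
  calc 2 * π * √T * ∫ x, ‖S2 T τ σ x - S1 T τ σ x * conj (S1 T τ σ x)‖
      ≤ 2 * π * √T * (Q τ σ / (4 * π ^ 2 * T) + Q τ σ / (4 * π ^ 2 * T)) := by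
        gcongr
        rw [hS1P, hS2P]
        exact (integral_norm_sub_mul_conj_le (integrable_lagProductSum hP T)
          (memLp_periodogramSum hP T)).trans (add_le_add (integral_norm_lagProductSum_le hP hPB T)
            (integral_norm_periodogramSum_sq_le hP hPB T))
    _ ≤ Q τ σ := two_pi_sqrt_mul_add_le hT (hQ_nonneg τ σ)

/-- Let `(X t)_{t ∈ ℤ}` be jointly measurable real-valued stochastic processes on `[0,1]`
with finite fourth moments pointwise and strictly stationary fourth moments.  Suppose
`∫₀¹∫₀¹ Q(τ,σ) dτ dσ < ∞`, where
`Q(τ,σ) = ∑_{t₁,t₂,t₃ ∈ ℤ} |E[X_{t₁}(τ) X_{t₂}(σ) X_{t₃}(τ) X_0(σ)]|`.  Then there exists an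
integrable function `f : [0,1]² → [0,∞)` such that for every `T ≥ 1` and every
`(τ,σ) ∈ [0,1]²`,
`2π √T · E|S_{T,2}(τ,σ) − S_{T,1}(τ,σ) conj(S_{T,1}(τ,σ))| ≤ f(τ,σ)`. -/
theorem dominating_function_exists
    {Ω : Type*} [MeasureSpace Ω] [IsProbabilityMeasure (volume : Measure Ω)]
    (X : ℤ → ℝ → Ω → ℝ)
    (hXmeas : ∀ t : ℤ, Measurable fun q : ℝ × Ω => X t q.1 q.2)
    (hX4 : ∀ (t : ℤ) (τ : ℝ), MemLp (fun x : Ω => X t τ x) 4)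
    (hstat : ∀ (u₁ u₂ u₃ u₄ : ℤ) (τ σ : ℝ),
      (∫ x, X u₁ τ x * X u₂ σ x * X u₃ τ x * X u₄ σ x)
        = ∫ x, X (u₁ - u₄) τ x * X (u₂ - u₄) σ x * X (u₃ - u₄) τ x * X 0 σ x)
    (Xt : ℕ → ℝ → ℝ → Ω → ℂ)
    (hXt : ∀ (T : ℕ) (ω τ : ℝ) (x : Ω), Xt T ω τ x = (1 / Real.sqrt (2 * π * T) : ℝ) *
      ∑ t ∈ Finset.range T, ((X t τ x : ℂ) * Complex.exp (-(Complex.I * ω * t))))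
    (p : ℕ → ℝ → ℝ → ℝ → Ω → ℂ)
    (hp : ∀ (T : ℕ) (ω τ σ : ℝ) (x : Ω), p T ω τ σ x = Xt T ω τ x * Xt T (-ω) σ x)
    (S1 S2 : ℕ → ℝ → ℝ → Ω → ℂ)
    (hS1 : ∀ (T : ℕ) (τ σ : ℝ) (x : Ω), S1 T τ σ x = (1 / (T : ℂ)) *
      ∑ k ∈ Finset.Icc 1 (T / 2),
        (p T (2 * π * k / T) τ σ x + conj (p T (2 * π * k / T) τ σ x)))
    (hS2 : ∀ (T : ℕ) (τ σ : ℝ) (x : Ω), S2 T τ σ x = (2 / (T : ℂ)) *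
      ∑ k ∈ Finset.Icc 2 (T / 2),
        p T (2 * π * k / T) τ σ x * conj (p T (2 * π * ((k : ℝ) - 1) / T) τ σ x))
    (Q : ℝ → ℝ → ℝ)
    (hQ : ∀ τ σ : ℝ, Q τ σ = ∑' t : ℤ × ℤ × ℤ,
      |∫ x, X t.1 τ x * X t.2.1 σ x * X t.2.2 τ x * X 0 σ x|)
    (hQsum : ∀ τ ∈ Set.Icc (0 : ℝ) 1, ∀ σ ∈ Set.Icc (0 : ℝ) 1,
      Summable fun t : ℤ × ℤ × ℤ =>
        |∫ x, X t.1 τ x * X t.2.1 σ x * X t.2.2 τ x * X 0 σ x|)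
    (hQint : IntegrableOn (fun q : ℝ × ℝ => Q q.1 q.2)
      (Set.Icc 0 1 ×ˢ Set.Icc 0 1)) :
    ∃ f : ℝ × ℝ → ℝ,
      IntegrableOn f (Set.Icc 0 1 ×ˢ Set.Icc 0 1)
      ∧ (∀ q : ℝ × ℝ, 0 ≤ f q)
      ∧ ∀ (T : ℕ), 1 ≤ T → ∀ τ ∈ Set.Icc (0 : ℝ) 1, ∀ σ ∈ Set.Icc (0 : ℝ) 1,
          2 * π * Real.sqrt T *
              ∫ x, ‖S2 T τ σ x - S1 T τ σ x * conj (S1 T τ σ x)‖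
            ≤ f (τ, σ) :=
  dominating_function_exists_general X hX4 hstat Xt hXt p hp S1 S2 hS1 hS2 Q hQ hQsum hQint
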